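/- arXiv:1305.0172 — 4 statements merged into one kernel-verified Lean document; each statement's English description precedes it below -/
import Mathlib

section
/- Let p, s, s' be points in the plane such that s and s' both lie in a cone with apex p of angular width π/3, and |p s'| ≤ |p s|. Then |s s'| ≤ |p s|. -/
/-!
The angle between `s - p` and `s' - p` is at most `π/6 + π/6 = π/3` by the triangle inequality
for angles, so its cosine is at least `1/2`. The law of cosines then gives
`|ss'|² ≤ |ps|² + |ps'|² - |ps|·|ps'| ≤ |ps|²`, the last step because `|ps'| ≤ |ps|`.
-/

open InnerProductGeometry Real

theorem InnerProductGeometry.norm_sub_le_of_angle_le_pi_div_three {V : Type*}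
    [NormedAddCommGroup V] [InnerProductSpace ℝ V] {x y : V} (hxy : angle x y ≤ π / 3)
    (hle : ‖y‖ ≤ ‖x‖) : ‖x - y‖ ≤ ‖x‖ := by
  have hcos : 1 / 2 ≤ cos (angle x y) := by
    rw [← cos_pi_div_three]
    exact cos_le_cos_of_nonneg_of_le_pi (angle_nonneg x y) (by linarith [pi_pos]) hxy
  have hsq : ‖x - y‖ * ‖x - y‖ ≤ ‖x‖ * ‖x‖ := by
    rw [norm_sub_sq_eq_norm_sq_add_norm_sq_sub_two_mul_norm_mul_norm_mul_cos_angle]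
    nlinarith [mul_le_mul_of_nonneg_left hcos (mul_nonneg (norm_nonneg x) (norm_nonneg y)),
      mul_le_mul_of_nonneg_left hle (norm_nonneg y)]
  exact (mul_self_le_mul_self_iff (norm_nonneg _) (norm_nonneg _)).2 hsq

theorem bottleneck_cone_dist_general
    (p s s' u : EuclideanSpace ℝ (Fin 2))
    (hs : InnerProductGeometry.angle (s - p) u ≤ Real.pi / 6)
    (hs' : InnerProductGeometry.angle (s' - p) u ≤ Real.pi / 6)
    (hle : dist p s' ≤ dist p s) :
    dist s s' ≤ dist p s := by
  have hangle : angle (s - p) (s' - p) ≤ π / 3 := by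
    have := angle_le_angle_add_angle (s - p) u (s' - p)
    rw [angle_comm u] at this
    linarith
  rw [dist_eq_norm', dist_eq_norm'] at hle
  rw [dist_eq_norm, dist_eq_norm', ← sub_sub_sub_cancel_right s s' p]
  exact norm_sub_le_of_angle_le_pi_div_three hangle hle

/-- If `s` and `s'` both lie in a cone with apex `p` of angular width π/3
(points whose direction from `p` makes angle at most π/6 with a fixed unit vector `u`),
and `dist p s' ≤ dist p s`, then `dist s s' ≤ dist p s`. -/
theorem bottleneck_cone_dist
    (p s s' u : EuclideanSpace ℝ (Fin 2)) (hu : ‖u‖ = 1)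
    (hs : InnerProductGeometry.angle (s - p) u ≤ Real.pi / 6)
    (hs' : InnerProductGeometry.angle (s' - p) u ≤ Real.pi / 6)
    (hle : dist p s' ≤ dist p s) :
    dist s s' ≤ dist p s :=
  bottleneck_cone_dist_general p s s' u hs hs' hle
end

section
/- Let T be a minimum spanning tree of a finite weighted connected graph, let λ > 0, and remove from T all edges of weight at least λ. Then two vertices u, v lie in the same resulting component if and only if there is a path from u to v in the original graph all of whose edges have weight less than λ. -/
/-!
Cycle property of minimum spanning trees: every edge on the tree path between the ends of an
edge `ab` of `G` weighs at most `w(ab)`, since otherwise swapping it for `ab` would give a lighter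
spanning tree. So the ends of every edge of `G` of weight `< λ` are joined by a tree path all of
whose edges weigh `< λ`, and the pruned tree has the same reachability relation as the subgraph
of `G` formed by the edges of weight `< λ`.
-/

/-- Total weight of the edges of a graph. -/
noncomputable def weightSum {V : Type*} [Fintype V] (G : SimpleGraph V)
    (w : Sym2 V → ℝ) : ℝ :=
  ∑ e ∈ (Set.toFinite G.edgeSet).toFinset, w e

namespace SimpleGraph

variable {V : Type*} {G H : SimpleGraph V} {a b u v : V}

theorem reachable_deleteEdges_iff_exists_walk_forall {s : Set (Sym2 V)} :
    (G.deleteEdges s).Reachable u v ↔ ∃ p : G.Walk u v, ∀ e ∈ p.edges, e ∉ s := by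
  refine ⟨fun ⟨p⟩ ↦ ⟨p.mapLe (deleteEdges_le s), fun e he ↦ ?_⟩,
    fun ⟨p, hp⟩ ↦ ⟨p.toDeleteEdges s hp⟩⟩
  rw [Walk.edges_mapLe_eq_edges] at he
  exact (edgeSet_deleteEdges s ▸ p.edges_subset_edgeSet he).2

theorem Reachable.of_forall_adj_reachable (h : ∀ ⦃a b⦄, G.Adj a b → H.Reachable a b)
    (huv : G.Reachable u v) : H.Reachable u v := by
  rw [reachable_eq_reflTransGen] at *
  exact Relation.reflTransGen_closed h _ _ huv

theorem IsAcyclic.not_reachable_deleteEdges_of_mem_edges (hG : G.IsAcyclic) {p : G.Walk a b}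
    (hp : p.IsPath) {e : Sym2 V} (he : e ∈ p.edges) : ¬(G.deleteEdges {e}).Reachable a b := by
  classical
  rintro ⟨r⟩
  have hpr : (⟨p, hp⟩ : G.Path a b) = (r.mapLe (deleteEdges_le _)).toPath :=
    (hG.subsingleton_path a b).elim _ _
  have hr : e ∈ r.edges := by
    rw [← Walk.edges_mapLe_eq_edges (deleteEdges_le {e})]
    exact Walk.edges_toPath_subset_edges _ (congrArg (fun q : G.Path a b ↦ q.val.edges) hpr ▸ he)
  simpa using r.edges_subset_edgeSet hr

theorem IsTree.isTree_deleteEdges_sup_edge (hT : G.IsTree) {p : G.Walk a b} (hp : p.IsPath)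
    (hab : ¬G.Adj a b) {e : Sym2 V} (he : e ∈ p.edges) :
    (G.deleteEdges {e} ⊔ edge a b).IsTree := by
  have hne : e ≠ s(a, b) := fun h ↦ hab (G.mem_edgeSet.1 (h ▸ p.edges_subset_edgeSet he))
  have hab' : a ≠ b := by rintro rfl; simp [Walk.isPath_iff_nil.1 hp |>.eq_nil] at he
  refine ⟨?_, (hT.isAcyclic.anti (deleteEdges_le _)).sup_edge_of_not_reachable
    (hT.isAcyclic.not_reachable_deleteEdges_of_mem_edges hp he)⟩
  have hsplit : G.deleteEdges {e} ⊔ edge a b = (G ⊔ edge a b).deleteEdges {e} := by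
    rw [deleteEdges_sup, (deleteEdges_eq_self (G := edge a b)).2]
    exact Set.disjoint_singleton_right.2 fun h ↦ hne (edgeSet_edge_subset h)
  -- `p` closed up by the new edge is a cycle through `e`, so `e` is no bridge of `G ⊔ edge a b`.
  have hba : (G ⊔ edge a b).Adj b a := Or.inr ((edge_adj ..).2 ⟨Or.inr ⟨rfl, rfl⟩, hab'.symm⟩)
  have hcycle : (Walk.cons hba (p.mapLe le_sup_left)).IsCycle := by
    rw [Walk.cons_isCycle_iff, Walk.edges_mapLe_eq_edges, Sym2.eq_swap]
    exact ⟨hp.mapLe _, fun h ↦ hab (p.adj_of_mem_edges h)⟩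
  induction e with | h x y
  rw [hsplit]
  refine (hT.connected.mono le_sup_left).connected_delete_edge_of_not_isBridge fun hbr ↦ ?_
  exact hbr.notMem_edges_of_isCycle hcycle (by simp [he])

variable [Fintype V] {w : Sym2 V → ℝ}

structure IsMinSpanningTree (G : SimpleGraph V) (w : Sym2 V → ℝ) (T : SimpleGraph V) : Prop where
  le : T ≤ G
  isTree : T.IsTree
  weightSum_le : ∀ T' : SimpleGraph V, T' ≤ G → T'.IsTree → weightSum T w ≤ weightSum T' w

theorem weightSum_deleteEdges_sup_edge {e : Sym2 V} (he : e ∈ G.edgeSet)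
    (hab : ¬G.Adj a b) (hne : a ≠ b) :
    weightSum (G.deleteEdges {e} ⊔ edge a b) w = weightSum G w - w e + w s(a, b) := by
  classical
  have hedges : (Set.toFinite (G.deleteEdges {e} ⊔ edge a b).edgeSet).toFinset =
      insert s(a, b) ((Set.toFinite G.edgeSet).toFinset.erase e) := by
    ext f
    simp [edgeSet_edge_of_ne hne, and_comm]
  have hnotmem : s(a, b) ∉ (Set.toFinite G.edgeSet).toFinset.erase e := by simp [hab]
  rw [weightSum, hedges, Finset.sum_insert hnotmem,
    Finset.sum_erase_eq_sub ((Set.toFinite G.edgeSet).mem_toFinset.2 he), weightSum]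
  ring

theorem IsMinSpanningTree.weight_le_of_mem_edges {T : SimpleGraph V}
    (hT : G.IsMinSpanningTree w T) (hab : G.Adj a b) {p : T.Walk a b} (hp : p.IsPath)
    {e : Sym2 V} (he : e ∈ p.edges) : w e ≤ w s(a, b) := by
  by_cases hTab : T.Adj a b
  · have hsingle : (⟨p, hp⟩ : T.Path a b) = Path.singleton hTab :=
      (hT.isTree.isAcyclic.subsingleton_path a b).elim _ _
    have hedges : p.edges = [s(a, b)] := by
      simpa using congrArg (fun q : T.Path a b ↦ q.val.edges) hsingle
    simp_all
  by_contra! hlt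
  have hle := hT.weightSum_le (T.deleteEdges {e} ⊔ edge a b)
    (sup_le ((deleteEdges_le _).trans hT.le) ((edge_le_iff _).2 (Or.inr hab)))
    (hT.isTree.isTree_deleteEdges_sup_edge hp hTab he)
  rw [weightSum_deleteEdges_sup_edge (p.edges_subset_edgeSet he) hTab hab.ne] at hle
  linarith

theorem IsMinSpanningTree.reachable_deleteEdges_iff {T : SimpleGraph V}
    (hT : G.IsMinSpanningTree w T) (lam : ℝ) :
    (T.deleteEdges {e | lam ≤ w e}).Reachable u v ↔
      (G.deleteEdges {e | lam ≤ w e}).Reachable u v := by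
  refine ⟨Reachable.mono (deleteEdges_mono hT.le), Reachable.of_forall_adj_reachable ?_⟩
  intro a b hab
  rw [deleteEdges_adj, Set.mem_ofPred_eq, not_le] at hab
  obtain ⟨p, hp⟩ := hT.isTree.connected.exists_isPath a b
  exact ⟨p.toDeleteEdges _ fun e he ↦
    not_le.2 ((hT.weight_le_of_mem_edges hab.1 hp he).trans_lt hab.2)⟩

end SimpleGraph

open SimpleGraph

theorem mst_component_iff_bounded_path_general
    {V : Type*} [Fintype V] (G : SimpleGraph V)
    (w : Sym2 V → ℝ)
    (T : SimpleGraph V) (hTG : T ≤ G) (hT : T.IsTree)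
    (hmin : ∀ T' : SimpleGraph V, T' ≤ G → T'.IsTree → weightSum T w ≤ weightSum T' w)
    (lam : ℝ) (u v : V) :
    (T.deleteEdges {e | lam ≤ w e}).Reachable u v ↔
      ∃ p : G.Walk u v, ∀ e ∈ p.edges, w e < lam := by
  rw [IsMinSpanningTree.reachable_deleteEdges_iff ⟨hTG, hT, hmin⟩ lam,
    reachable_deleteEdges_iff_exists_walk_forall]
  simp only [Set.mem_ofPred_eq, not_le]

/-- Let `T` be a minimum spanning tree of a finite weighted connected graph `G`,
let `λ > 0`, and remove from `T` all edges of weight at least `λ`. Then `u` and `v` lie in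
the same component of the resulting forest iff there is a path from `u` to `v` in `G` all of
whose edges have weight less than `λ`. -/
theorem mst_component_iff_bounded_path
    {V : Type*} [Fintype V] (G : SimpleGraph V) (hG : G.Connected)
    (w : Sym2 V → ℝ)
    (T : SimpleGraph V) (hTG : T ≤ G) (hT : T.IsTree)
    (hmin : ∀ T' : SimpleGraph V, T' ≤ G → T'.IsTree → weightSum T w ≤ weightSum T' w)
    (lam : ℝ) (hlam : 0 < lam) (u v : V) :
    (T.deleteEdges {e | lam ≤ w e}).Reachable u v ↔
      ∃ p : G.Walk u v, ∀ e ∈ p.edges, w e < lam :=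
  mst_component_iff_bounded_path_general G w T hTG hT hmin lam u v
end

section
/- Let T be a minimum spanning tree of a finite weighted connected graph and let T* be any subtree of the graph all of whose edges have weight less than λ. Then all vertices of T* lie in a single connected component of the forest obtained from T by deleting all edges of weight at least λ. -/
open SimpleGraph

namespace SimpleGraph

variable {V : Type*}

lemma Reachable.of_forall_adj_reachable_s3 {W : Type*} {G : SimpleGraph V} {G' : SimpleGraph W}
    (f : V → W) (h : ∀ x y, G.Adj x y → G'.Reachable (f x) (f y)) {u v : V}
    (huv : G.Reachable u v) : G'.Reachable (f u) (f v) := by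
  obtain ⟨p⟩ := huv
  induction p with
  | nil => rfl
  | cons hadj _ ih => exact (h _ _ hadj).trans ih

lemma IsAcyclic.not_reachable_deleteEdges_of_mem_edges_s3 {T : SimpleGraph V} (hT : T.IsAcyclic)
    {u v : V} {p : T.Walk u v} (hp : p.IsPath) {f : Sym2 V} (hf : f ∈ p.edges) :
    ¬(T.deleteEdges {f}).Reachable u v := by
  classical
  induction f with | h a b =>
  rw [reachable_deleteEdges_iff_exists_walk]
  rintro ⟨q, hq⟩
  obtain rfl : p = q.bypass :=
    congrArg Subtype.val ((hT.subsingleton_path u v).elim ⟨p, hp⟩ ⟨_, q.bypass_isPath⟩)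
  exact hq (q.edges_bypass_subset_edges hf)

lemma Connected.reachable_deleteEdges_or {T : SimpleGraph V} (hT : T.Connected) (a b x : V) :
    (T.deleteEdges {s(a, b)}).Reachable x a ∨ (T.deleteEdges {s(a, b)}).Reachable x b := by
  suffices h : ∀ {x c : V}, T.Walk x c → c = a →
      (T.deleteEdges {s(a, b)}).Reachable x a ∨ (T.deleteEdges {s(a, b)}).Reachable x b from
    h (hT.preconnected x a).some rfl
  intro x c p hc
  induction p with
  | nil => exact .inl (hc ▸ .rfl)
  | @cons x y _ hxy _ ih =>
    by_cases hf : s(x, y) = s(a, b)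
    · rcases Sym2.eq_iff.mp hf with ⟨rfl, -⟩ | ⟨rfl, -⟩
      · exact .inl .rfl
      · exact .inr .rfl
    · have hadj : (T.deleteEdges {s(a, b)}).Adj x y := by simpa [hf] using hxy
      exact (ih hc).imp hadj.reachable.trans hadj.reachable.trans

lemma IsTree.deleteEdges_sup_edge {T : SimpleGraph V} (hT : T.IsTree) {a b u v : V}
    (huv : ¬(T.deleteEdges {s(a, b)}).Reachable u v) :
    (T.deleteEdges {s(a, b)} ⊔ edge u v).IsTree := by
  set D := T.deleteEdges {s(a, b)}
  have hside := hT.connected.reachable_deleteEdges_or a b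
  have hne : u ≠ v := by rintro rfl; exact huv .rfl
  have hnew : (D ⊔ edge u v).Reachable u v := Adj.reachable (by simp [edge_adj, hne])
  have hab : (D ⊔ edge u v).Reachable a b := by
    rcases hside u with hu | hu <;> rcases hside v with hv | hv
    · exact absurd (hu.trans hv.symm) huv
    · exact (hu.mono le_sup_left).symm.trans (hnew.trans (hv.mono le_sup_left))
    · exact (hv.mono le_sup_left).symm.trans (hnew.symm.trans (hu.mono le_sup_left))
    · exact absurd (hu.trans hv.symm) huv
  refine ⟨(connected_iff_exists_forall_reachable _).2 ⟨a, fun x => ?_⟩,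
    (hT.isAcyclic.anti (deleteEdges_le _)).sup_edge_of_not_reachable huv⟩
  rcases hside x with h | h
  · exact (h.mono le_sup_left).symm
  · exact hab.trans (h.mono le_sup_left).symm

end SimpleGraph

section weightSum

variable {V : Type*} [Fintype V] (G : SimpleGraph V) (w : Sym2 V → ℝ)

lemma weightSum_sup_edge {u v : V} (huv : u ≠ v) (h : ¬G.Adj u v) :
    weightSum (G ⊔ edge u v) w = weightSum G w + w s(u, v) := by
  classical
  have hE : (G ⊔ edge u v).edgeSet = insert s(u, v) G.edgeSet := by
    rw [edgeSet_sup, edgeSet_edge_of_ne huv, Set.union_singleton]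
  simp only [weightSum, hE, Set.Finite.toFinset_insert]
  rw [Finset.sum_insert (by simpa using h), add_comm]

lemma weightSum_deleteEdges_singleton {f : Sym2 V} (hf : f ∈ G.edgeSet) :
    weightSum (G.deleteEdges {f}) w = weightSum G w - w f := by
  classical
  have hE : (G.deleteEdges {f}).edgeSet = G.edgeSet \ {f} := edgeSet_deleteEdges _
  simp only [weightSum, hE]
  rw [Set.Finite.toFinset_sdiff (Set.toFinite _) (Set.toFinite _), Set.Finite.toFinset_singleton,
    Finset.sum_sdiff_eq_sub (by simpa using hf), Finset.sum_singleton]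

end weightSum

section MinimumSpanningTree

variable {V : Type*} [Fintype V]

structure IsMinSpanningTree (G T : SimpleGraph V) (w : Sym2 V → ℝ) : Prop where
  le : T ≤ G
  isTree : T.IsTree
  weightSum_le : ∀ T' : SimpleGraph V, T' ≤ G → T'.IsTree → weightSum T w ≤ weightSum T' w

namespace IsMinSpanningTree

variable {G T : SimpleGraph V} {w : Sym2 V → ℝ} (hT : IsMinSpanningTree G T w)
include hT

theorem weight_le_of_mem_edges_of_isPath {u v : V} (huv : G.Adj u v) {p : T.Walk u v}
    (hp : p.IsPath) {f : Sym2 V} (hf : f ∈ p.edges) : w f ≤ w s(u, v) := by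
  induction f with | h a b =>
  have hcut := hT.isTree.isAcyclic.not_reachable_deleteEdges_of_mem_edges_s3 hp hf
  set T' := T.deleteEdges {s(a, b)} ⊔ edge u v
  have hT'G : T' ≤ G := sup_le ((deleteEdges_le _).trans hT.le) ((edge_le_iff _).2 (.inr huv))
  have hweight : weightSum T' w = weightSum T w - w s(a, b) + w s(u, v) := by
    rw [weightSum_sup_edge _ _ huv.ne fun h => hcut h.reachable,
      weightSum_deleteEdges_singleton _ _ (p.edges_subset_edgeSet hf)]
  linarith [hT.weightSum_le T' hT'G (hT.isTree.deleteEdges_sup_edge hcut)]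

theorem reachable_deleteEdges_heavy_of_adj {lam : ℝ} {u v : V} (huv : G.Adj u v)
    (hw : w s(u, v) < lam) : (T.deleteEdges {e | lam ≤ w e}).Reachable u v := by
  obtain ⟨p, hp⟩ := hT.isTree.connected.exists_isPath u v
  exact ⟨p.toDeleteEdges _ fun f hf =>
    ((hT.weight_le_of_mem_edges_of_isPath huv hp hf).trans_lt hw).not_ge⟩

end IsMinSpanningTree

end MinimumSpanningTree

theorem subtree_in_single_component_general
    {V : Type*} [Fintype V] (G : SimpleGraph V)
    (w : Sym2 V → ℝ)
    (T : SimpleGraph V) (hTG : T ≤ G) (hT : T.IsTree)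
    (hmin : ∀ T' : SimpleGraph V, T' ≤ G → T'.IsTree → weightSum T w ≤ weightSum T' w)
    (lam : ℝ)
    (H : G.Subgraph) (hHconn : H.Connected)
    (hHw : ∀ e ∈ H.edgeSet, w e < lam) :
    ∀ u ∈ H.verts, ∀ v ∈ H.verts,
      (T.deleteEdges {e | lam ≤ w e}).Reachable u v := by
  intro u hu v hv
  exact (hHconn.coe ⟨u, hu⟩ ⟨v, hv⟩).of_forall_adj_reachable_s3 Subtype.val fun x y hxy =>
    IsMinSpanningTree.reachable_deleteEdges_heavy_of_adj ⟨hTG, hT, hmin⟩ (H.adj_sub hxy)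
      (hHw _ hxy)

/-- Let `T` be a minimum spanning tree of a finite weighted connected graph `G`
and let `H` be any subtree of `G` (a connected acyclic subgraph) all of whose edges have
weight less than `λ`. Then all vertices of `H` lie in a single connected component of the
forest obtained from `T` by deleting all edges of weight at least `λ`. -/
theorem subtree_in_single_component
    {V : Type*} [Fintype V] (G : SimpleGraph V) (hG : G.Connected)
    (w : Sym2 V → ℝ)
    (T : SimpleGraph V) (hTG : T ≤ G) (hT : T.IsTree)
    (hmin : ∀ T' : SimpleGraph V, T' ≤ G → T'.IsTree → weightSum T w ≤ weightSum T' w)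
    (lam : ℝ)
    (H : G.Subgraph) (hHconn : H.Connected) (hHacyclic : H.coe.IsAcyclic)
    (hHw : ∀ e ∈ H.edgeSet, w e < lam) :
    ∀ u ∈ H.verts, ∀ v ∈ H.verts,
      (T.deleteEdges {e | lam ≤ w e}).Reachable u v :=
  subtree_in_single_component_general G w T hTG hT hmin lam H hHconn hHw
end

section
/- Let s₁, ..., s_m be real numbers (m ≥ 2, not all equal) with minimum a and maximum b, and let g = (b - a)/(m+1). Place S = {(s_i, 0) : 1 ≤ i ≤ m} and let P be a set of points in the plane such that every point of P is within distance g/2 of (a,0) or within distance g/2 of (b,0), with at least one point near each. Then any spanning tree on P ∪ S in which every point of P is a leaf adjacent to a point of S has some edge of length at least G, where G is the maximum gap of s₁,...,s_m; moreover there exists such a tree whose longest edge has length exactly G. -/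
/-- The point of the Euclidean plane with coordinates `(x, y)`. -/
noncomputable def pt (x y : ℝ) : EuclideanSpace ℝ (Fin 2) :=
  (WithLp.equiv 2 (Fin 2 → ℝ)).symm ![x, y]

noncomputable local instance : DecidableEq (EuclideanSpace ℝ (Fin 2)) :=
  Classical.decEq _

/-!
Let sites `i` and `i + 1` realise the maximum gap `G`. In a tree, a path between these two sites
cannot pass through a point of `P`, as those are leaves; so some edge joins a site `≤ i` to a site
`≥ i + 1`, and it has length at least `G`. Conversely, join consecutive sites into a path and hang
each point of `P` off its nearby end site: the path edges are gaps, hence at most `G`, and the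
pendant edges are at most `g / 2 ≤ G`, because `b - a` is a sum of `m - 1` gaps.
-/

namespace SimpleGraph

variable {V : Type*}

theorem Preconnected.exists_adj_boundary_avoiding_leaves {G : SimpleGraph V}
    (hG : G.Preconnected) {A L : Set V} (hL : ∀ v ∈ L, ∃! u, G.Adj v u) {x y : V}
    (hx : x ∈ A) (hy : y ∉ A) (hyL : y ∉ L) :
    ∃ u v, G.Adj u v ∧ u ∈ A ∧ v ∉ A ∧ v ∉ L := by
  -- Absorb into `A` the leaves hanging off it; a boundary dart of the enlarged set cannot
  -- start at such a leaf, whose only neighbour lies in `A`.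
  obtain ⟨d, -, hd, hd'⟩ := (hG x y).some.exists_boundary_dart
    (A ∪ {v | v ∈ L ∧ ∃ w ∈ A, G.Adj v w}) (Or.inl hx) (by simp [hy, hyL])
  have hsnd : d.snd ∉ A := fun h => hd' (Or.inl h)
  have hfst : d.fst ∈ A := by
    rcases hd with h | ⟨hleaf, w, hw, hadj⟩
    · exact h
    · obtain rfl := (hL _ hleaf).unique d.adj hadj
      exact absurd hw hsnd
  exact ⟨d.fst, d.snd, d.adj, hfst, hsnd,
    fun h => hd' (Or.inr ⟨h, d.fst, hfst, d.adj.symm⟩)⟩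

section Parent

variable {f : V → V}

theorem fromRel_parent_adj_iff_of_notMem_range {v : V} (hv : v ∉ Set.range f) {u : V} :
    (fromRel fun a b => f a = b).Adj v u ↔ u = f v := by
  refine ⟨fun ⟨_, h⟩ => h.elim Eq.symm fun h => absurd ⟨u, h⟩ hv, ?_⟩
  rintro rfl
  exact ⟨fun h => hv ⟨v, h.symm⟩, Or.inl rfl⟩

variable {r : V} (ρ : V → ℕ)

theorem fromRel_parent_reachable_root (hρ : ∀ v, v ≠ r → ρ (f v) < ρ v) (v : V) :
    (fromRel fun a b => f a = b).Reachable v r := by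
  induction h : ρ v using Nat.strong_induction_on generalizing v with
  | _ n ih =>
    by_cases hv : v = r
    · exact hv ▸ Reachable.refl _
    · have hadj : (fromRel fun a b => f a = b).Adj v (f v) :=
        ⟨fun h => (hρ v hv).ne (congrArg ρ h.symm), Or.inl rfl⟩
      exact hadj.reachable.trans (ih _ (h ▸ hρ v hv) _ rfl)

theorem fromRel_parent_isBridge (hr : f r = r) (hρ : ∀ v, v ≠ r → ρ (f v) < ρ v) {v : V}
    (hv : v ≠ f v) :
    (fromRel fun a b => f a = b).IsBridge s(v, f v) := by
  rintro ⟨w⟩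
  have hanti {x y} (h : Relation.ReflTransGen (fun a b => f a = b) x y) : ρ y ≤ ρ x := by
    induction h with
    | refl => exact le_rfl
    | @tail b _ _ hbc ih =>
      obtain rfl | hb := eq_or_ne b r
      · exact hbc ▸ hr.symm ▸ ih
      · exact (hbc ▸ (hρ b hb).le).trans ih
  -- `D` is the set of descendants of `v`; the only edge leaving it is `s(v, f v)`.
  set D := {x | Relation.ReflTransGen (fun a b => f a = b) x v}
  have hfv : f v ∉ D := fun h => (hanti h).not_gt (hρ v fun h => hv (h ▸ hr.symm))
  obtain ⟨d, -, hd, hd'⟩ := w.exists_boundary_dart D Relation.ReflTransGen.refl hfv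
  obtain ⟨⟨-, hfd | hfd⟩, hde⟩ := (deleteEdges_adj ..).1 d.adj
  · rcases hd.cases_head with h | ⟨c, rfl, hc⟩
    · exact hde (by simp [← hfd, h])
    · exact hd' (hfd ▸ hc)
  · exact hd' (hd.head hfd)

theorem isTree_fromRel_parent (hr : f r = r) (hρ : ∀ v, v ≠ r → ρ (f v) < ρ v) :
    (fromRel fun a b => f a = b).IsTree := by
  have : Nonempty V := ⟨r⟩
  refine ⟨.mk fun u v => (fromRel_parent_reachable_root ρ hρ u).trans
    (fromRel_parent_reachable_root ρ hρ v).symm, ?_⟩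
  refine isAcyclic_iff_forall_adj_isBridge.2 fun u v ⟨huv, h⟩ => ?_
  rcases h with rfl | rfl
  · exact fromRel_parent_isBridge ρ hr hρ huv
  · exact Sym2.eq_swap ▸ fromRel_parent_isBridge ρ hr hρ huv.symm

end Parent

end SimpleGraph

open Finset

theorem dist_pt_zero (x y : ℝ) : dist (pt x 0) (pt y 0) = |x - y| := by
  simp [EuclideanSpace.dist_eq, pt, Fin.sum_univ_two, Real.dist_eq, Real.sqrt_sq_eq_abs]

theorem dist_pt_zero_of_le {x y : ℝ} (h : x ≤ y) : dist (pt x 0) (pt y 0) = y - x := by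
  rw [dist_pt_zero, abs_sub_comm, abs_of_nonneg (sub_nonneg.2 h)]

theorem pt_zero_injective : Function.Injective fun x => pt x 0 := fun x y h => by
  simpa [pt] using congrFun ((WithLp.equiv 2 (Fin 2 → ℝ)).symm.injective h) 0

theorem sub_le_mul_of_forall_gap_le {m : ℕ} {s : Fin m → ℝ} {G : ℝ}
    (hgap : ∀ i j : Fin m, (j : ℕ) = i + 1 → s j - s i ≤ G) (j : Fin m) :
    s j - s ⟨0, j.pos⟩ ≤ j * G := by
  induction h : (j : ℕ) generalizing j with
  | zero => simp [show j = ⟨0, j.pos⟩ from Fin.ext h]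
  | succ n ih =>
    have := hgap ⟨n, by omega⟩ j (by simp [h])
    have := ih ⟨n, by omega⟩ rfl
    push_cast
    linarith

theorem sub_div_le_of_forall_gap_le {m : ℕ} {s : Fin m → ℝ} {G : ℝ} (hG : 0 ≤ G)
    (hgap : ∀ i j : Fin m, (j : ℕ) = i + 1 → s j - s i ≤ G) (j : Fin m) :
    (s j - s ⟨0, j.pos⟩) / (m + 1) ≤ G := by
  rw [div_le_iff₀ (by positivity)]
  have hj : (j : ℝ) ≤ m + 1 := by exact_mod_cast (by omega : (j : ℕ) ≤ m + 1)
  nlinarith [sub_le_mul_of_forall_gap_le hgap j]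

section Caterpillar

variable {V : Type*} {m : ℕ} (L : Set V) [DecidablePred (· ∈ L)] (site : Fin m → V)
  (ι : V → Fin m)

/-- Off `L`, `ι` is meant to invert `site`; truncated subtraction makes `site 0` the root. -/
def caterpillarParent (v : V) : V :=
  if v ∈ L then site (ι v) else site ⟨ι v - 1, by omega⟩

theorem caterpillarParent_mem_range (v : V) : caterpillarParent L site ι v ∈ Set.range site := by
  unfold caterpillarParent
  split_ifs <;> exact ⟨_, rfl⟩

variable {L site ι}

theorem caterpillarParent_site (hL : ∀ i, site i ∉ L) (hι : ∀ i, ι (site i) = i)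
    (i : Fin m) : caterpillarParent L site ι (site i) = site ⟨i - 1, by omega⟩ := by
  simp [caterpillarParent, hL, hι]

theorem isTree_fromRel_caterpillarParent (hm : 0 < m) (hL : ∀ i, site i ∉ L)
    (hι : ∀ i, ι (site i) = i) (hsite : ∀ v ∉ L, site (ι v) = v) :
    (SimpleGraph.fromRel fun a b => caterpillarParent L site ι a = b).IsTree := by
  refine SimpleGraph.isTree_fromRel_parent (fun v => if v ∈ L then m else ι v)
    (r := site ⟨0, hm⟩) (by simp [caterpillarParent_site hL hι]) fun v hv => ?_
  obtain ⟨i, hi⟩ := caterpillarParent_mem_range L site ι v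
  by_cases hvL : v ∈ L
  · simp only [← hi, hvL, hL, hι, if_true, if_false]
    exact i.2
  · have h0 : (ι v : ℕ) ≠ 0 := fun h =>
      hv ((hsite v hvL).symm.trans (congrArg site (Fin.ext h)))
    simp only [caterpillarParent, hvL, if_false, hL, hι]
    omega

end Caterpillar

section Sites

variable {E : Type*} [DecidableEq E] {m : ℕ} {q : Fin m → E} {S P : Finset E}

theorem exists_adj_sites_across (hq : Function.Injective q) (hS : S = univ.image q)
    (hdisj : Disjoint P S) {T : SimpleGraph ↥(P ∪ S)} (hT : T.Preconnected)
    (hleaf : ∀ v : ↥(P ∪ S), (v : E) ∈ P → ∃! u, T.Adj v u) {i j : Fin m}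
    (hij : i < j) :
    ∃ u v : ↥(P ∪ S), T.Adj u v ∧
      ∃ k l, k ≤ i ∧ i < l ∧ (u : E) = q k ∧ (v : E) = q l := by
  subst hS
  have hmem (k : Fin m) : q k ∈ P ∪ univ.image q :=
    mem_union_right _ (mem_image_of_mem q (mem_univ k))
  obtain ⟨u, v, huv, ⟨k, hki, hu⟩, hvA, hvP⟩ := hT.exists_adj_boundary_avoiding_leaves
    (A := {v | ∃ k ≤ i, (v : E) = q k}) (L := {v | (v : E) ∈ P})
    hleaf (x := ⟨_, hmem i⟩) (y := ⟨_, hmem j⟩) ⟨i, le_rfl, rfl⟩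
    (fun ⟨k, hki, hk⟩ => (hki.trans_lt hij).ne' (hq hk))
    (disjoint_right.1 hdisj (mem_image_of_mem q (mem_univ j)))
  obtain ⟨l, -, hl⟩ := mem_image.1 ((mem_union.1 v.2).resolve_left hvP)
  exact ⟨u, v, huv, k, l, hki, not_le.1 fun h => hvA ⟨l, h, hl.symm⟩, hu, hl.symm⟩

theorem exists_isTree_dist_le [MetricSpace E] (hm : 0 < m) (hq : Function.Injective q)
    (hS : S = univ.image q) (hdisj : Disjoint P S) {G : ℝ}
    (hgap : ∀ i j : Fin m, (j : ℕ) = i + 1 → dist (q j) (q i) ≤ G)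
    (hP : ∀ p ∈ P, ∃ i, dist p (q i) ≤ G) :
    ∃ T : SimpleGraph ↥(P ∪ S), T.IsTree ∧
      (∀ v : ↥(P ∪ S), (v : E) ∈ P →
        (∃! u, T.Adj v u) ∧ ∀ u, T.Adj v u → (u : E) ∈ S) ∧
      (∀ u v : ↥(P ∪ S), T.Adj u v → dist (u : E) v ≤ G) ∧
      ∀ i j : Fin m, (j : ℕ) = i + 1 →
        ∃ u v : ↥(P ∪ S), T.Adj u v ∧ (u : E) = q j ∧ (v : E) = q i := by
  classical
  subst hS
  let site (i : Fin m) : ↥(P ∪ univ.image q) :=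
    ⟨q i, mem_union_right _ (mem_image_of_mem q (mem_univ i))⟩
  let L : Set ↥(P ∪ univ.image q) := {v | (v : E) ∈ P}
  have hL (i : Fin m) : site i ∉ L :=
    disjoint_right.1 hdisj (mem_image_of_mem q (mem_univ i))
  have hindex (v : ↥(P ∪ univ.image q)) :
      ∃ i, ((v : E) ∈ P → dist (v : E) (q i) ≤ G) ∧ ((v : E) ∉ P → site i = v) := by
    by_cases hv : (v : E) ∈ P
    · exact (hP _ hv).imp fun i hi => ⟨fun _ => hi, (absurd hv ·)⟩
    · obtain ⟨i, -, hi⟩ := mem_image.1 ((mem_union.1 v.2).resolve_left hv)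
      exact ⟨i, (absurd · hv), fun _ => Subtype.ext hi⟩
  choose ι hιP hsite using hindex
  have hι (i : Fin m) : ι (site i) = i := hq (congrArg Subtype.val (hsite _ (hL i)))
  set f := caterpillarParent L site ι
  have hf_site (i : Fin m) : f (site i) = site ⟨i - 1, by omega⟩ :=
    caterpillarParent_site hL hι i
  have hstep (v) (hv : f v ≠ v) : dist (v : E) (f v) ≤ G := by
    by_cases hvP : (v : E) ∈ P
    · rw [show f v = site (ι v) from if_pos hvP]
      exact hιP v hvP
    · rw [← hsite v hvP, hf_site] at hv ⊢
      have h0 : (ι v : ℕ) ≠ 0 := fun h => hv (congrArg site (Fin.ext (by simp [h])))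
      simpa [dist_comm, site] using hgap ⟨ι v - 1, by omega⟩ (ι v) (by simp only; omega)
  refine ⟨SimpleGraph.fromRel fun a b => f a = b,
    isTree_fromRel_caterpillarParent hm hL hι hsite, fun v hvP => ?_, ?_, fun i j hij => ?_⟩
  · have hv : v ∉ Set.range f := fun ⟨u, hu⟩ => by
      obtain ⟨i, hi⟩ := caterpillarParent_mem_range L site ι u
      exact hL i (hi.trans hu ▸ hvP)
    simp only [SimpleGraph.fromRel_parent_adj_iff_of_notMem_range hv, existsUnique_eq, forall_eq,
      true_and]
    obtain ⟨i, hi⟩ := caterpillarParent_mem_range L site ι v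
    rw [show f v = site i from hi.symm]
    exact mem_image_of_mem q (mem_univ i)
  · rintro u v ⟨huv, rfl | rfl⟩
    · exact hstep u (Ne.symm huv)
    · exact dist_comm (v : E) _ ▸ hstep v huv
  · refine ⟨site j, site i, ⟨fun h => ?_, Or.inl ?_⟩, rfl, rfl⟩
    · have := hq (congrArg Subtype.val h)
      omega
    · show f (site j) = site i
      rw [hf_site]
      exact congrArg site (Fin.ext (by simp [hij]))

end Sites

/-- Let `s 0 < … < s (m-1)` (`m ≥ 2`) with minimum `a`, maximum `b`,
`g = (b-a)/(m+1)`, and maximum gap `G`. Put `S = {(s i, 0)}` and let `P` be a set of points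
each within `g/2` of `(a,0)` or of `(b,0)`, with at least one point near each. Then every
spanning tree on `P ∪ S` in which each point of `P` is a leaf adjacent to a point of `S`
has an edge of length at least `G`, and some such tree has longest edge of length exactly `G`. -/
theorem maxGap_bottleneck_steiner
    (m : ℕ) (hm : 2 ≤ m) (s : Fin m → ℝ) (hs : StrictMono s)
    (a b g G : ℝ)
    (ha : a = s ⟨0, by omega⟩) (hb : b = s ⟨m - 1, by omega⟩)
    (hg : g = (b - a) / (m + 1))
    (hG : G = Finset.univ.sup'
      (by
        have h1 : 0 < m - 1 := by omega
        haveI : Nonempty (Fin (m - 1)) := Fin.pos_iff_nonempty.mp h1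
        exact Finset.univ_nonempty)
      (fun i : Fin (m - 1) => s ⟨i.1 + 1, by omega⟩ - s ⟨i.1, by omega⟩))
    (S P : Finset (EuclideanSpace ℝ (Fin 2)))
    (hS : S = Finset.univ.image (fun i : Fin m => pt (s i) 0))
    (hdisj : Disjoint P S)
    (hP : ∀ p ∈ P, dist p (pt a 0) ≤ g / 2 ∨ dist p (pt b 0) ≤ g / 2) :
    (∀ T : SimpleGraph ↥(P ∪ S), T.IsTree →
      (∀ v : ↥(P ∪ S), (v : EuclideanSpace ℝ (Fin 2)) ∈ P →
        (∃! u, T.Adj v u) ∧ ∀ u, T.Adj v u → (u : EuclideanSpace ℝ (Fin 2)) ∈ S) →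
      ∃ u v : ↥(P ∪ S), T.Adj u v ∧
        G ≤ dist (u : EuclideanSpace ℝ (Fin 2)) (v : EuclideanSpace ℝ (Fin 2))) ∧
    (∃ T : SimpleGraph ↥(P ∪ S), T.IsTree ∧
      (∀ v : ↥(P ∪ S), (v : EuclideanSpace ℝ (Fin 2)) ∈ P →
        (∃! u, T.Adj v u) ∧ ∀ u, T.Adj v u → (u : EuclideanSpace ℝ (Fin 2)) ∈ S) ∧
      (∀ u v : ↥(P ∪ S), T.Adj u v →
        dist (u : EuclideanSpace ℝ (Fin 2)) (v : EuclideanSpace ℝ (Fin 2)) ≤ G) ∧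
      (∃ u v : ↥(P ∪ S), T.Adj u v ∧
        dist (u : EuclideanSpace ℝ (Fin 2)) (v : EuclideanSpace ℝ (Fin 2)) = G)) := by
  have hgap (i j : Fin m) (hij : (j : ℕ) = i + 1) : s j - s i ≤ G :=
    hG ▸ le_sup'_of_le _ (mem_univ ⟨i, by omega⟩) (by simp only [← hij]; rfl)
  obtain ⟨i, j, hij, hGij⟩ : ∃ i j : Fin m, (j : ℕ) = i + 1 ∧ s j - s i = G := by
    obtain ⟨k, -, hk⟩ := exists_mem_eq_sup' ⟨⟨0, by omega⟩, mem_univ _⟩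
      fun i : Fin (m - 1) => s ⟨i.1 + 1, by omega⟩ - s ⟨i.1, by omega⟩
    exact ⟨_, _, rfl, (hG.trans hk).symm⟩
  have hgG : g / 2 ≤ G := by
    have hG0 : 0 ≤ G := hGij ▸ sub_nonneg.2 (hs.monotone (Fin.le_def.2 (by omega)))
    have hgG := sub_div_le_of_forall_gap_le hG0 hgap ⟨m - 1, by omega⟩
    rw [← ha, ← hb, ← hg] at hgG
    linarith
  have hq : Function.Injective fun i => pt (s i) 0 := pt_zero_injective.comp hs.injective
  refine ⟨fun T hT hleaf => ?_, ?_⟩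
  · obtain ⟨u, v, huv, k, l, hki, hil, hu, hv⟩ := exists_adj_sites_across hq hS hdisj
      hT.connected.preconnected (fun v hv => (hleaf v hv).1) (Fin.lt_def.2 (by omega) : i < j)
    refine ⟨u, v, huv, ?_⟩
    rw [hu, hv, dist_pt_zero_of_le (hs.monotone (hki.trans hil.le)), ← hGij]
    exact sub_le_sub (hs.monotone (Fin.le_def.2 (by omega))) (hs.monotone hki)
  · obtain ⟨T, hT, hleaf, hshort, hedge⟩ := exists_isTree_dist_le (by omega) hq hS hdisj
      (fun i j hij => by
        rw [dist_comm, dist_pt_zero_of_le (hs.monotone (Fin.le_def.2 (by omega)))]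
        exact hgap i j hij)
      fun p hp => (hP p hp).elim (fun h => ⟨_, ha ▸ h.trans hgG⟩)
        (fun h => ⟨_, hb ▸ h.trans hgG⟩)
    obtain ⟨u, v, huv, hu, hv⟩ := hedge i j hij
    refine ⟨T, hT, hleaf, hshort, u, v, huv, ?_⟩
    rw [hu, hv, dist_comm, dist_pt_zero_of_le (hs.monotone (Fin.le_def.2 (by omega))), hGij]
end
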